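/- arXiv:1004.1563 — 2 statements merged into one kernel-verified Lean document; each statement's English description precedes it below -/
import Mathlib

section
/- Fix k ≥ 1 and let p_1 < p_2 < ... denote the primes in increasing order. Then the averages (1/n)·∑_{j=1}^{n} |μ̃_k(j)| converge, as n → ∞, to ∏_{i=1}^{k} (1 - 1/p_i²). -/
open ArithmeticFunction Finset Filter

/-- `nthPrime k` is the `k`-th prime in the increasing enumeration of the primes,
indexed from 1 (so `nthPrime 1 = 2`, `nthPrime 2 = 3`, ...). -/
noncomputable def nthPrime (k : ℕ) : ℕ := Nat.nth Nat.Prime (k - 1)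

/-- The `p_k`-smooth part of `n`: the product of all prime powers `p ^ (ν_p n)` in the
factorization of `n` with `p ≤ p_k`. -/
noncomputable def smoothPart (k n : ℕ) : ℕ :=
  n.factorization.prod fun p e => if p ≤ nthPrime k then p ^ e else 1

/-- The `k`-th Möbius prime-function: writing `n = s · m` with `s` the `p_k`-smooth part of `n`
and `m` coprime to all primes `≤ p_k`, it equals `μ s` if `m = 1` and `-μ s` if `m > 1`. -/
noncomputable def mobiusP (k n : ℕ) : ℤ :=
  if n / smoothPart k n = 1 then moebius (smoothPart k n) else -moebius (smoothPart k n)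

/-!
`|μ̃_k(j)| = |μ(s)|` is the indicator that the `p_k`-smooth part `s` of `j` is squarefree,
i.e. that `j` is divisible by none of `p_1², …, p_k²`. These moduli are pairwise coprime, so by
inclusion–exclusion the number of such `j ≤ n` is `∑_T (-1)^|T| ⌊n / ∏_{i ∈ T} p_i²⌋`. After
dividing by `n` each floor tends to `1 / ∏_{i ∈ T} p_i²`, and the alternating sum of these
limits is the expansion of `∏_{i ≤ k} (1 - 1/p_i²)`.
-/

open Nat Function Topology

lemma Nat.prod_dvd_iff_of_pairwise_coprime {ι : Type*} {s : Finset ι} {f : ι → ℕ}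
    (hf : (s : Set ι).Pairwise (Coprime on f)) {n : ℕ} :
    ∏ i ∈ s, f i ∣ n ↔ ∀ i ∈ s, f i ∣ n := by
  refine ⟨fun h i hi => (dvd_prod_of_mem f hi).trans h, fun h => ?_⟩
  have : ∏ i ∈ s, (f i : ℤ) ∣ n := Finset.prod_dvd_of_coprime
    (fun i hi j hj hij => Nat.isCoprime_iff_coprime.mpr (hf hi hj hij))
    (fun i hi => Int.natCast_dvd_natCast.mpr (h i hi))
  exact_mod_cast this

lemma tendsto_nat_div_div_atTop (d : ℕ) :
    Tendsto (fun n : ℕ => ((n / d : ℕ) : ℝ) / n) atTop (𝓝 (1 / d)) := by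
  rcases eq_or_ne d 0 with rfl | hd
  · simp
  have hd' : (0 : ℝ) < d := by positivity
  have h := (tendsto_nat_floor_div_atTop.comp
    (tendsto_natCast_atTop_atTop.atTop_div_const hd')).mul_const (1 / (d : ℝ))
  rw [one_mul] at h
  refine h.congr fun n => ?_
  rw [Function.comp_apply, Nat.floor_div_eq_div]
  rcases eq_or_ne (n : ℝ) 0 with hn | hn
  · simp [hn]
  · field_simp

section Sieve

variable {ι : Type*} [DecidableEq ι]

lemma card_filter_forall_not_dvd_eq_sum {s : Finset ι} {f : ι → ℕ}
    (hf : (s : Set ι).Pairwise (Coprime on f)) (n : ℕ) :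
    (#{j ∈ Icc 1 n | ∀ i ∈ s, ¬ f i ∣ j} : ℤ) =
      ∑ t ∈ s.powerset, (-1) ^ #t * ((n / ∏ i ∈ t, f i : ℕ) : ℤ) := by
  have hterm (j : ℕ) : (if ∀ i ∈ s, ¬ f i ∣ j then 1 else 0 : ℤ) =
      ∑ t ∈ s.powerset, (-1) ^ #t * if ∏ i ∈ t, f i ∣ j then 1 else 0 := by
    have hnot (i : ι) :
        (if ¬ f i ∣ j then 1 else 0 : ℤ) = 1 - if f i ∣ j then 1 else 0 := by
      split_ifs <;> simp
    simp only [← prod_boole, hnot, prod_sub, prod_const_one, mul_one]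
    refine sum_congr rfl fun t ht => ?_
    simp only [prod_boole, Nat.prod_dvd_iff_of_pairwise_coprime (hf.mono (mem_powerset.mp ht))]
  rw [card_filter, Nat.cast_sum]
  simp only [Nat.cast_ite, Nat.cast_one, Nat.cast_zero, hterm]
  rw [sum_comm]
  refine sum_congr rfl fun t _ => ?_
  rw [← mul_sum, ← Nat.Ioc_filter_dvd_card_eq_div, ← Icc_succ_left_eq_Ioc 0, sum_boole]
  rfl

theorem tendsto_card_filter_forall_not_dvd_div {s : Finset ι} {f : ι → ℕ}
    (hf : (s : Set ι).Pairwise (Coprime on f)) :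
    Tendsto (fun n : ℕ => (#{j ∈ Icc 1 n | ∀ i ∈ s, ¬ f i ∣ j} : ℝ) / n) atTop
      (𝓝 (∏ i ∈ s, (1 - 1 / (f i : ℝ)))) := by
  have hcount (n : ℕ) : (#{j ∈ Icc 1 n | ∀ i ∈ s, ¬ f i ∣ j} : ℝ) / n =
      ∑ t ∈ s.powerset, (-1) ^ #t * (((n / ∏ i ∈ t, f i : ℕ) : ℝ) / n) := by
    rw [← Int.cast_natCast, card_filter_forall_not_dvd_eq_sum hf n]
    simp only [Int.cast_sum, Int.cast_mul, Int.cast_pow, Int.cast_neg, Int.cast_one,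
      Int.cast_natCast, sum_div, mul_div_assoc]
  have hlimit : ∏ i ∈ s, (1 - 1 / (f i : ℝ)) =
      ∑ t ∈ s.powerset, (-1) ^ #t * (1 / ((∏ i ∈ t, f i : ℕ) : ℝ)) := by
    simp [prod_sub, one_div, prod_inv_distrib]
  simp only [hcount, hlimit]
  exact tendsto_finsetSum _ fun t _ => (tendsto_nat_div_div_atTop _).const_mul _

end Sieve

lemma prime_nthPrime (k : ℕ) : (nthPrime k).Prime := prime_nth_prime _

lemma nthPrime_injOn : Set.InjOn nthPrime (Set.Ici 1) := fun a ha b hb h => by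
  have := nth_injective infinite_setOfPred_prime h
  simp only [Set.mem_Ici] at ha hb
  omega

lemma forall_prime_le_nthPrime_iff {k : ℕ} (hk : 1 ≤ k) {P : ℕ → Prop} :
    (∀ p, p.Prime → p ≤ nthPrime k → P p) ↔ ∀ i ∈ Icc 1 k, P (nthPrime i) := by
  refine ⟨fun h i hi => h _ (prime_nthPrime i) ?_, fun h p hp hle => ?_⟩
  · rw [mem_Icc] at hi
    exact (nth_le_nth infinite_setOfPred_prime).mpr (by omega)
  · have hcount : count Nat.Prime p ≤ k - 1 :=
      (count_le_iff_le_nth infinite_setOfPred_prime).mpr hle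
    simpa [nthPrime, nth_count hp] using
      h (count Nat.Prime p + 1) (mem_Icc.mpr ⟨by omega, by omega⟩)

lemma smoothPart_eq_prod_filter (k n : ℕ) :
    smoothPart k n = (n.factorization.filter (· ≤ nthPrime k)).prod (· ^ ·) := by
  rw [smoothPart, Finsupp.prod_filter_index, Finsupp.support_filter, prod_filter, Finsupp.prod]

lemma factorization_smoothPart (k n : ℕ) :
    (smoothPart k n).factorization = n.factorization.filter (· ≤ nthPrime k) := by
  rw [smoothPart_eq_prod_filter]
  refine prod_pow_factorization_eq_self fun p hp => ?_
  rw [Finsupp.support_filter, mem_filter, support_factorization] at hp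
  exact prime_of_mem_primeFactors hp.1

lemma smoothPart_pos (k n : ℕ) : 0 < smoothPart k n := by
  rw [smoothPart, Finsupp.prod]
  refine Finset.prod_pos fun p hp => ?_
  rw [support_factorization] at hp
  split_ifs
  exacts [pow_pos (prime_of_mem_primeFactors hp).pos _, one_pos]

lemma squarefree_smoothPart_iff {k n : ℕ} (hn : n ≠ 0) :
    Squarefree (smoothPart k n) ↔ ∀ p, p.Prime → p ≤ nthPrime k → ¬ p ^ 2 ∣ n := by
  rw [squarefree_iff_factorization_le_one ((smoothPart_pos k n).ne'), factorization_smoothPart]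
  refine forall_congr' fun p => ?_
  rw [Finsupp.filter_apply]
  by_cases hp : p.Prime
  · rw [hp.pow_dvd_iff_le_factorization hn]
    split_ifs <;> simp [*]
  · simp [hp, factorization_eq_zero_of_not_prime]

lemma abs_mobiusP {k n : ℕ} (hk : 1 ≤ k) (hn : n ≠ 0) :
    |mobiusP k n| = if ∀ i ∈ Icc 1 k, ¬ nthPrime i ^ 2 ∣ n then 1 else 0 := by
  have habs : |mobiusP k n| = |moebius (smoothPart k n)| := by
    unfold mobiusP
    split_ifs <;> simp only [abs_neg]
  rw [habs, abs_moebius]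
  exact if_congr ((squarefree_smoothPart_iff hn).trans (forall_prime_le_nthPrime_iff hk)) rfl rfl

lemma pairwise_coprime_nthPrime_sq (k : ℕ) :
    (Icc 1 k : Set ℕ).Pairwise (Coprime on fun i => nthPrime i ^ 2) := fun i hi j hj hij =>
  Coprime.pow 2 2 <| (coprime_primes (prime_nthPrime i) (prime_nthPrime j)).mpr fun h =>
    hij (nthPrime_injOn (Set.mem_Ici.mpr (mem_Icc.mp hi).1) (Set.mem_Ici.mpr (mem_Icc.mp hj).1) h)

/-- The averages `(1/n)·∑_{j=1}^{n} |μ̃_k(j)|` converge to `∏_{i=1}^{k} (1 - 1/p_i²)`. -/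
theorem mobiusP_abs_average_tendsto (k : ℕ) (hk : 1 ≤ k) :
    Tendsto (fun n : ℕ => (∑ j ∈ Finset.Icc 1 n, |(mobiusP k j : ℝ)|) / n) atTop
      (nhds (∏ i ∈ Finset.Icc 1 k, (1 - 1 / (nthPrime i : ℝ) ^ 2))) := by
  have hsum (n : ℕ) : ∑ j ∈ Icc 1 n, |(mobiusP k j : ℝ)| =
      #{j ∈ Icc 1 n | ∀ i ∈ Icc 1 k, ¬ nthPrime i ^ 2 ∣ j} := by
    rw [card_filter, Nat.cast_sum]
    refine sum_congr rfl fun j hj => ?_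
    rw [← Int.cast_abs, abs_mobiusP hk (by rw [mem_Icc] at hj; omega)]
    split_ifs <;> simp
  simp only [hsum]
  convert tendsto_card_filter_forall_not_dvd_div (pairwise_coprime_nthPrime_sq k) using 4
  push_cast
  rfl
end

section
/- The asymptotic density of squarefree numbers is 6/π²: if Q(n) denotes the number of squarefree integers m with 1 ≤ m ≤ n, then Q(n)/n converges to 6/π² as n → ∞. -/
/-!
Möbius inversion over square divisors detects squarefreeness, which gives
`Q(n) = ∑_d μ(d) ⌊n / d²⌋`. After dividing by `n`, the `d`-th term tends to `μ(d) / d²` and is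
bounded by `1 / d²`, so by dominated convergence for series (Tannery's theorem)
`Q(n) / n → ∑_d μ(d) / d² = 1 / ζ(2) = 6 / π²`.
-/

open Finset Filter ArithmeticFunction
open scoped ArithmeticFunction.Moebius Topology

namespace Nat

theorem sq_dvd_sq_mul_iff_dvd_of_squarefree {a b d : ℕ} (ha : Squarefree a) :
    d ^ 2 ∣ b ^ 2 * a ↔ d ∣ b := by
  rcases eq_or_ne b 0 with rfl | hb
  · simp
  rcases eq_or_ne d 0 with rfl | hd
  · simp [hb, ha.ne_zero]
  have hle := (squarefree_iff_factorization_le_one ha.ne_zero).mp ha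
  rw [← factorization_le_iff_dvd (by positivity) (by simp [hb, ha.ne_zero]),
    ← factorization_le_iff_dvd hd hb, factorization_mul (by positivity) ha.ne_zero,
    factorization_pow, factorization_pow, Finsupp.le_def, Finsupp.le_def]
  refine forall_congr' fun p => ?_
  have := hle p
  simp only [Finsupp.smul_apply, Finsupp.add_apply, smul_eq_mul]
  omega

theorem cast_div_div_self_le {α : Type*} [Field α] [LinearOrder α] [IsStrictOrderedRing α]
    (n k : ℕ) : ((n / k : ℕ) : α) / n ≤ 1 / k := by
  rcases eq_or_ne n 0 with rfl | hn
  · simp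
  calc ((n / k : ℕ) : α) / n ≤ (n / k : α) / n := by gcongr; exact cast_div_le
    _ = 1 / k := by field_simp

theorem tendsto_cast_div_div_self_atTop (k : ℕ) :
    Tendsto (fun n : ℕ => ((n / k : ℕ) : ℝ) / n) atTop (𝓝 (1 / k)) := by
  rcases eq_or_ne k 0 with rfl | hk
  · simp
  have hk' : (0 : ℝ) < k := by positivity
  have hfloor := (tendsto_nat_floor_div_atTop (R := ℝ)).comp
    ((tendsto_natCast_atTop_atTop (R := ℝ)).atTop_div_const hk')
  have := hfloor.mul_const (1 / (k : ℝ))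
  rw [one_mul] at this
  refine this.congr' ?_
  filter_upwards [eventually_ne_atTop 0] with n hn
  simp only [Function.comp_apply, floor_div_eq_div]
  field_simp

end Nat

namespace ArithmeticFunction

theorem sum_divisors_moebius (n : ℕ) : ∑ d ∈ n.divisors, μ d = if n = 1 then 1 else 0 := by
  have h := DFunLike.congr_fun moebius_mul_coe_zeta n
  rwa [coe_mul_zeta_apply, one_apply] at h

theorem sum_divisors_filter_sq_dvd_moebius {m : ℕ} (hm : m ≠ 0) :
    ∑ d ∈ m.divisors with d ^ 2 ∣ m, μ d = if Squarefree m then 1 else 0 := by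
  -- With `m = b² a` and `a` squarefree, the `d` with `d² ∣ m` are the divisors of `b`.
  obtain ⟨a, b, -, -, rfl, ha⟩ := Nat.sq_mul_squarefree_of_pos (Nat.pos_of_ne_zero hm)
  have hdiv : {d ∈ (b ^ 2 * a).divisors | d ^ 2 ∣ b ^ 2 * a} = b.divisors := by
    ext d
    simp only [mem_filter, Nat.mem_divisors, Nat.sq_dvd_sq_mul_iff_dvd_of_squarefree ha]
    exact ⟨fun h => ⟨h.2, by rintro rfl; simp at hm⟩,
      fun h => ⟨⟨h.1.trans ((dvd_pow_self b two_ne_zero).mul_right a), hm⟩, h.1⟩⟩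
  have hsq : Squarefree (b ^ 2 * a) ↔ b = 1 := by
    refine ⟨fun h => Nat.isUnit_iff.mp (h b ⟨a, by ring⟩), ?_⟩
    rintro rfl
    simpa using ha
  simp only [hdiv, sum_divisors_moebius, hsq]

theorem card_squarefree_Icc_eq_sum_moebius (n : ℕ) :
    (#{m ∈ Icc 1 n | Squarefree m} : ℤ) = ∑ d ∈ Icc 1 n, μ d * (n / d ^ 2 : ℕ) := by
  have hIcc : Icc 1 n = Ioc 0 n := rfl
  calc (#{m ∈ Icc 1 n | Squarefree m} : ℤ)
      = ∑ m ∈ Ioc 0 n, ∑ d ∈ m.divisors with d ^ 2 ∣ m, μ d := by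
        rw [hIcc, natCast_card_filter]
        exact sum_congr rfl fun m hm =>
          (sum_divisors_filter_sq_dvd_moebius (mem_Ioc.mp hm).1.ne').symm
    _ = ∑ d ∈ Ioc 0 n, ∑ m ∈ Ioc 0 n with d ^ 2 ∣ m, μ d := by
        refine sum_comm' fun m d => ?_
        simp only [mem_Ioc, mem_filter, Nat.mem_divisors]
        constructor
        · rintro ⟨hm, ⟨hdm, -⟩, hd2⟩
          exact ⟨⟨hm, hd2⟩, Nat.pos_of_dvd_of_pos hdm hm.1, (Nat.le_of_dvd hm.1 hdm).trans hm.2⟩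
        · rintro ⟨⟨hm, hd2⟩, -⟩
          exact ⟨hm, ⟨(dvd_pow_self d two_ne_zero).trans hd2, hm.1.ne'⟩, hd2⟩
    _ = ∑ d ∈ Icc 1 n, μ d * (n / d ^ 2 : ℕ) := by
        rw [hIcc]
        refine sum_congr rfl fun d _ => ?_
        rw [sum_const, Nat.Ioc_filter_dvd_card_eq_div, nsmul_eq_mul, mul_comm]

theorem card_squarefree_Icc_div_eq_tsum (n : ℕ) :
    (#{m ∈ Icc 1 n | Squarefree m} : ℝ) / n = ∑' d : ℕ, (μ d : ℝ) * ((n / d ^ 2 : ℕ) / n) := by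
  have hcount : (#{m ∈ Icc 1 n | Squarefree m} : ℝ)
      = ∑ d ∈ Icc 1 n, (μ d : ℝ) * (n / d ^ 2 : ℕ) := by
    rw [← Int.cast_natCast, card_squarefree_Icc_eq_sum_moebius]
    simp only [Int.cast_sum, Int.cast_mul, Int.cast_natCast]
  rw [hcount, sum_div, tsum_eq_sum (s := Icc 1 n)]
  · simp only [mul_div_assoc]
  · intro d hd
    rcases eq_or_ne d 0 with rfl | hd0
    · simp
    · have hnd : n < d := by simp only [mem_Icc, not_and_or] at hd; omega
      simp [Nat.div_eq_of_lt (hnd.trans_le (Nat.le_self_pow two_ne_zero d))]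

theorem tsum_moebius_div_sq : ∑' d : ℕ, (μ d : ℝ) / d ^ 2 = 6 / Real.pi ^ 2 := by
  have h2 : 1 < (2 : ℂ).re := by norm_num
  have hL := LSeries_zeta_mul_Lseries_moebius h2
  rw [LSeries_zeta_eq_riemannZeta h2, riemannZeta_two] at hL
  have hμ : LSeries (fun n => (μ n : ℂ)) 2 = ((∑' d : ℕ, (μ d : ℝ) / d ^ 2 : ℝ) : ℂ) := by
    rw [Complex.ofReal_tsum]
    refine tsum_congr fun d => ?_
    rcases eq_or_ne d 0 with rfl | hd
    · simp
    · simp [LSeries.term_of_ne_zero hd]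
  rw [hμ] at hL
  have hR : Real.pi ^ 2 / 6 * ∑' d : ℕ, (μ d : ℝ) / d ^ 2 = 1 := by exact_mod_cast hL
  have hπ := Real.pi_pos.ne'
  field_simp
  linear_combination 6 * hR

end ArithmeticFunction

/-- The asymptotic density of squarefree numbers is `6/π²`: if `Q(n)` is the number of
squarefree integers in `{1, ..., n}`, then `Q(n)/n → 6/π²` as `n → ∞`. -/
theorem squarefree_density :
    Tendsto (fun n : ℕ =>
        (((Finset.Icc 1 n).filter fun m => Squarefree m).card : ℝ) / n) atTop
      (nhds (6 / Real.pi ^ 2)) := by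
  simp_rw [card_squarefree_Icc_div_eq_tsum, ← tsum_moebius_div_sq]
  refine tendsto_tsum_of_dominated_convergence (Real.summable_one_div_nat_pow.mpr one_lt_two)
    (fun d => ?_) (.of_forall fun n d => ?_)
  · have := (Nat.tendsto_cast_div_div_self_atTop (d ^ 2)).const_mul (μ d : ℝ)
    rwa [mul_one_div, Nat.cast_pow] at this
  · rw [norm_mul, ← one_mul (1 / _)]
    gcongr
    · rw [Real.norm_eq_abs]
      exact_mod_cast abs_moebius_le_one
    · rw [Real.norm_of_nonneg (by positivity)]
      exact_mod_cast Nat.cast_div_div_self_le n (d ^ 2)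
end
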